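/- arXiv:2108.04995 — 6 statements merged into one kernel-verified Lean document; each statement's English description precedes it below -/
import Mathlib

section
/- Let C be a code on n neurons and let U = (U_1, …, U_n) be a realization of C by open subsets of ℝ^d. If a tuple (σ1, σ2, σ3, τ) of subsets of [n] is a wheel of U (i.e., satisfies W(i), W(ii), W(iii)), then U is not a convex realization: it is not the case that every U_i is convex. Consequently, if some tuple is a wheel of every realization of C, then C is non-convex. -/
namespace NeuralCode

/-- `USet U σ` is `U_σ = ⋂ i ∈ σ, U i` (the whole space when `σ = ∅`). -/
def USet {ι : Type*} {d : ℕ} (U : ι → Set (EuclideanSpace ℝ (Fin d))) (σ : Finset ι) :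
    Set (EuclideanSpace ℝ (Fin d)) :=
  ⋂ i ∈ σ, U i

/-- The atom of the codeword `c` in the family `U`. -/
def codeAtom {ι : Type*} {d : ℕ} (U : ι → Set (EuclideanSpace ℝ (Fin d))) (c : Finset ι) :
    Set (EuclideanSpace ℝ (Fin d)) :=
  USet U c \ ⋃ j ∉ c, U j

/-- The family `U` (of open sets) is a realization of the code `C`. -/
def IsRealization {ι : Type*} {d : ℕ} (C : Set (Finset ι))
    (U : ι → Set (EuclideanSpace ℝ (Fin d))) : Prop :=
  (∀ i, IsOpen (U i)) ∧ ∀ c : Finset ι, c ∈ C ↔ (codeAtom U c).Nonempty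

/-- The code `C` is convex: for some dimension `d` it admits a realization in `ℝ^d`
by convex open sets. -/
def IsConvexCode {ι : Type*} (C : Set (Finset ι)) : Prop :=
  ∃ (d : ℕ) (U : ι → Set (EuclideanSpace ℝ (Fin d))),
    IsRealization C U ∧ ∀ i, Convex ℝ (U i)

/-- The trunk of `σ` in `C`: the set of codewords containing `σ`. -/
def trunk {ι : Type*} (C : Set (Finset ι)) (σ : Finset ι) : Set (Finset ι) :=
  {c | c ∈ C ∧ σ ⊆ c}

/-- The neural complex `Δ(C)` of `C`. -/
def neuralComplex {ι : Type*} (C : Set (Finset ι)) : Set (Finset ι) :=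
  {σ | ∃ c ∈ C, σ ⊆ c}

/-- Condition W(i). -/
def WheelWi {ι : Type*} {d : ℕ} (U : ι → Set (EuclideanSpace ℝ (Fin d)))
    (σ1 σ2 σ3 : Finset ι) : Prop :=
  USet U σ1 ∩ USet U σ2 = USet U σ1 ∩ USet U σ2 ∩ USet U σ3 ∧
    USet U σ1 ∩ USet U σ3 = USet U σ1 ∩ USet U σ2 ∩ USet U σ3 ∧
    USet U σ2 ∩ USet U σ3 = USet U σ1 ∩ USet U σ2 ∩ USet U σ3 ∧
    (USet U σ1 ∩ USet U σ2 ∩ USet U σ3).Nonempty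

/-- Condition W(ii). -/
def WheelWii {ι : Type*} {d : ℕ} (U : ι → Set (EuclideanSpace ℝ (Fin d)))
    (σ1 σ2 σ3 τ : Finset ι) : Prop :=
  USet U σ1 ∩ USet U σ2 ∩ USet U σ3 ∩ USet U τ = ∅

/-- Condition W(iii). -/
def WheelWiii {ι : Type*} {d : ℕ} (U : ι → Set (EuclideanSpace ℝ (Fin d)))
    (σ1 σ2 σ3 τ : Finset ι) : Prop :=
  (Convex ℝ (USet U τ) ∧ Convex ℝ (USet U σ1 ∩ USet U τ) ∧
      Convex ℝ (USet U σ2 ∩ USet U τ) ∧ Convex ℝ (USet U σ3 ∩ USet U τ)) →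
    ∃ x ∈ USet U σ1 ∩ USet U τ, ∃ y ∈ USet U σ3 ∩ USet U τ,
      (segment ℝ x y ∩ (USet U σ2 ∩ USet U τ)).Nonempty

/-- Condition W(iii)◦. -/
def WheelWiiiCirc {ι : Type*} {d : ℕ} (U : ι → Set (EuclideanSpace ℝ (Fin d)))
    (σ1 σ2 σ3 τ : Finset ι) : Prop :=
  (USet U σ1 ∩ USet U τ).Nonempty ∧ (USet U σ2 ∩ USet U τ).Nonempty ∧
    (USet U σ3 ∩ USet U τ).Nonempty

/-- `(σ1, σ2, σ3, τ)` is a wheel of the realization `U`. -/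
def IsWheelOfRealization {ι : Type*} {d : ℕ} (U : ι → Set (EuclideanSpace ℝ (Fin d)))
    (σ1 σ2 σ3 τ : Finset ι) : Prop :=
  WheelWi U σ1 σ2 σ3 ∧ WheelWii U σ1 σ2 σ3 τ ∧ WheelWiii U σ1 σ2 σ3 τ

/-- Condition P(i). -/
def CondPi {ι : Type*} [DecidableEq ι] (C : Set (Finset ι)) (σ1 σ2 σ3 : Finset ι) : Prop :=
  σ1 ∪ σ2 ∪ σ3 ∈ neuralComplex C ∧
    trunk C (σ1 ∪ σ2) = trunk C (σ1 ∪ σ2 ∪ σ3) ∧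
    trunk C (σ1 ∪ σ3) = trunk C (σ1 ∪ σ2 ∪ σ3) ∧
    trunk C (σ2 ∪ σ3) = trunk C (σ1 ∪ σ2 ∪ σ3)

/-- Condition P(ii). -/
def CondPii {ι : Type*} [DecidableEq ι] (C : Set (Finset ι)) (σ1 σ2 σ3 τ : Finset ι) : Prop :=
  σ1 ∪ σ2 ∪ σ3 ∪ τ ∉ neuralComplex C

/-- Condition P(iii)◦. -/
def CondPiiiCirc {ι : Type*} [DecidableEq ι] (C : Set (Finset ι)) (σ1 σ2 σ3 τ : Finset ι) :
    Prop :=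
  σ1 ∪ τ ∈ neuralComplex C ∧ σ2 ∪ τ ∈ neuralComplex C ∧ σ3 ∪ τ ∈ neuralComplex C

/-- `(σ1, σ2, σ3, τ)` is a sprocket of `C`. -/
def IsSprocket {ι : Type*} [DecidableEq ι] (C : Set (Finset ι)) (σ1 σ2 σ3 τ : Finset ι) :
    Prop :=
  σ1 ∈ neuralComplex C ∧ σ2 ∈ neuralComplex C ∧ σ3 ∈ neuralComplex C ∧
    τ ∈ neuralComplex C ∧
    CondPi C σ1 σ2 σ3 ∧ CondPii C σ1 σ2 σ3 τ ∧ CondPiiiCirc C σ1 σ2 σ3 τ ∧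
    ∃ ρ1 ∈ neuralComplex C, ∃ ρ3 ∈ neuralComplex C,
      trunk C (σ1 ∪ τ) ⊆ trunk C ρ1 ∧ trunk C (σ3 ∪ τ) ⊆ trunk C ρ3 ∧
      trunk C τ ⊆ trunk C ρ1 ∪ trunk C ρ3 ∧
      trunk C (ρ1 ∪ ρ3 ∪ τ) ⊆ trunk C σ2

/-- `F` is a facet of `Δ(C)`: an inclusion-maximal codeword of `C`. -/
def IsFacet {ι : Type*} (C : Set (Finset ι)) (F : Finset ι) : Prop :=
  F ∈ C ∧ ∀ c ∈ C, F ⊆ c → c = F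

/-- `τ` is a max-intersection face of `Δ(C)`: a face equal to the intersection of two or
more distinct facets. -/
def IsMaxIntersectionFace {ι : Type*} [DecidableEq ι] [Fintype ι] (C : Set (Finset ι))
    (τ : Finset ι) : Prop :=
  τ ∈ neuralComplex C ∧
    ∃ S : Finset (Finset ι), 2 ≤ S.card ∧ (∀ F ∈ S, IsFacet C F) ∧ τ = S.inf id

/-- The link graph of `τ` in `Δ(C)`. -/
def linkGraph {ι : Type*} [DecidableEq ι] (C : Set (Finset ι)) (τ : Finset ι) :
    SimpleGraph {i : ι // i ∉ τ ∧ insert i τ ∈ neuralComplex C} where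
  Adj a b := a ≠ b ∧ τ ∪ {(a : ι), (b : ι)} ∈ neuralComplex C
  symm := ⟨fun a b h => ⟨h.1.symm, by rw [Finset.pair_comm]; exact h.2⟩⟩
  loopless := ⟨fun a h => h.1 rfl⟩

/-- `(σ1, σ2, σ3, τ)` is a wire wheel of `C`. -/
def IsWireWheel {ι : Type*} [DecidableEq ι] (C : Set (Finset ι)) (σ1 σ2 σ3 τ : Finset ι) :
    Prop :=
  σ1 ∈ neuralComplex C ∧ σ2 ∈ neuralComplex C ∧ σ3 ∈ neuralComplex C ∧
    τ ∈ neuralComplex C ∧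
    CondPi C σ1 σ2 σ3 ∧ CondPii C σ1 σ2 σ3 τ ∧ τ ∉ C ∧
    (∀ ω : Finset ι, ω.card = 3 → Disjoint ω τ → τ ∪ ω ∉ neuralComplex C) ∧
    (linkGraph C τ).IsTree ∧
    ∃ v1 v2 v3 : {i : ι // i ∉ τ ∧ insert i τ ∈ neuralComplex C},
      σ1 \ τ = {(v1 : ι)} ∧ σ2 \ τ = {(v2 : ι)} ∧ σ3 \ τ = {(v3 : ι)} ∧
      ∀ p : (linkGraph C τ).Walk v1 v3, p.IsPath → v2 ∈ p.support

/-- `(σ1, σ3, τ)` is a wheel frame of `C`. -/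
def IsWheelFrame {ι : Type*} [DecidableEq ι] (C : Set (Finset ι)) (σ1 σ3 τ : Finset ι) :
    Prop :=
  σ1 ∈ neuralComplex C ∧ σ3 ∈ neuralComplex C ∧ τ ∈ neuralComplex C ∧
    (σ1 ∪ σ3 ∈ neuralComplex C ∧
      ∀ ω : Finset ι, ω ⊆ σ1 ∪ σ3 → ¬ω ⊆ σ1 → ¬ω ⊆ σ3 → ω ∪ τ ∈ neuralComplex C →
        trunk C (σ1 ∪ ω) = trunk C (σ1 ∪ σ3) ∧ trunk C (σ3 ∪ ω) = trunk C (σ1 ∪ σ3)) ∧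
    τ ∪ σ1 ∪ σ3 ∉ neuralComplex C ∧
    σ1 ∪ τ ∈ neuralComplex C ∧ σ3 ∪ τ ∈ neuralComplex C ∧
    σ1 ∩ σ3 = ∅ ∧
    trunk C τ ⊆ ⋃ i ∈ (σ1 ∪ σ3 : Finset ι), trunk C {i}

/-- A subset of `ℝ^d` is top-dimensional: every nonempty intersection with an open set
has nonempty interior. -/
def TopDimensional {d : ℕ} (S : Set (EuclideanSpace ℝ (Fin d))) : Prop :=
  ∀ O : Set (EuclideanSpace ℝ (Fin d)), IsOpen O → (S ∩ O).Nonempty →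
    (interior (S ∩ O)).Nonempty

/-- A realization is top-dimensional if each of its atoms is empty or top-dimensional. -/
def IsTopDimRealization {ι : Type*} {d : ℕ} (U : ι → Set (EuclideanSpace ℝ (Fin d))) :
    Prop :=
  ∀ c : Finset ι, codeAtom U c = ∅ ∨ TopDimensional (codeAtom U c)

/-- `C` is top-dimensionally convex. -/
def IsTopDimConvexCode {ι : Type*} (C : Set (Finset ι)) : Prop :=
  ∃ (d : ℕ) (U : ι → Set (EuclideanSpace ℝ (Fin d))),
    IsRealization C U ∧ IsTopDimRealization U ∧ ∀ i, Convex ℝ (U i)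

/-- The restriction `C|_χ = {c ∩ χ : c ∈ C}`, as a code on the neuron set `χ`. -/
def restrictCode {ι : Type*} [DecidableEq ι] (C : Set (Finset ι)) (χ : Finset ι) :
    Set (Finset {i : ι // i ∈ χ}) :=
  (fun c => c.subtype (· ∈ χ)) '' C

/-- Neuron `j` is trivial in `C`: no codeword contains it. -/
def TrivialNeuron {ι : Type*} (C : Set (Finset ι)) (j : ι) : Prop :=
  ∀ c ∈ C, j ∉ c

/-- Neuron `j` is redundant in `C`. -/
def RedundantNeuron {ι : Type*} [DecidableEq ι] (C : Set (Finset ι)) (j : ι) : Prop :=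
  ¬TrivialNeuron C j ∧ ∃ σ : Finset ι, j ∉ σ ∧ trunk C {j} = trunk C σ

/-- `C` is decomposable with embedded part supported on `φ`. -/
def IsDecomposable {ι : Type*} [DecidableEq ι] [Fintype ι] (C : Set (Finset ι))
    (φ : Finset ι) : Prop :=
  φ ≠ ∅ ∧ φ ≠ Finset.univ ∧
    ∃ ψ : Finset ι, Disjoint φ ψ ∧ ψ ≠ Finset.univ ∧ ψ ∈ C ∧
      ∀ c ∈ C, (c ∩ φ).Nonempty → ∃ φ' ⊆ φ, c = φ' ∪ ψ

end NeuralCode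

open NeuralCode

/-!
Suppose every `U i` is convex and put `P = U_{σ1} ∩ U_{σ2} ∩ U_{σ3}`, a nonempty open convex
set. By W(i), `U_{σ1}` and `U_{σ3}` both meet `U_{σ2}` exactly in `P`. Let `z ∈ U_{σ2} ∩ U_τ`
lie on a segment `[x, y]` with `x ∈ U_{σ1}`, `y ∈ U_{σ3}` as in W(iii); by W(ii) `z` stays away
from `closure P`. Walking from `p ∈ P` towards `z` inside `U_{σ2}` we leave `P` at a point
`w ∈ closure P \ P`, and a functional `f` separates: `f < f w` on `P`. Since `U_{σ1}` coincides
with `P` near `w`, convexity forces `f ≤ f w` on all of `U_{σ1}`, and likewise on `U_{σ3}`.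
Hence `f z ≤ f w`, although `f` increases strictly from `p` to `w` along the segment `[p, z]`.
-/

open Set Filter Topology

section TopologicalVectorSpace

variable {E : Type*} [AddCommGroup E] [Module ℝ E]

theorem LinearMap.apply_lt_of_apply_lt_of_mem_openSegment (f : E →ₗ[ℝ] ℝ) {p z w : E}
    (hw : w ∈ openSegment ℝ p z) (hp : f p < f w) : f w < f z := by
  obtain ⟨a, b, ha, hb, hab, rfl⟩ := hw
  simp only [map_add, map_smul, smul_eq_mul] at hp ⊢
  obtain rfl : a = 1 - b := by linarith
  nlinarith

variable [TopologicalSpace E] [IsTopologicalAddGroup E] [ContinuousSMul ℝ E]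

/-- Were `f v > f w`, a point of `P` near `w` pushed slightly towards `v` would stay in
`V ∩ W ⊆ P` while `f` exceeds `f w` there. -/
theorem Convex.apply_le_of_inter_open_subset {V W P : Set E} (hV : Convex ℝ V) (hW : IsOpen W)
    {w : E} (hwW : w ∈ W) (hwP : w ∈ closure P) (hPV : P ⊆ V) (hVW : V ∩ W ⊆ P)
    {f : E →L[ℝ] ℝ} (hf : ∀ a ∈ P, f a < f w) {v : E} (hv : v ∈ V) : f v ≤ f w := by
  by_contra! hlt
  let g : ℝ → E → E := fun t u => (1 - t) • u + t • v
  have hg : Continuous fun t => g t w := by fun_prop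
  have hg0 : g 0 w = w := by simp [g]
  obtain ⟨t, hgtW, ht0, ht1⟩ : ∃ t, g t w ∈ W ∧ 0 < t ∧ t < 1 := by
    have hnear : ∀ᶠ t in 𝓝 0, g t w ∈ W :=
      hg.continuousAt.preimage_mem_nhds (by rw [hg0]; exact hW.mem_nhds hwW)
    exact ((hnear.filter_mono nhdsWithin_le_nhds).and (Ioo_mem_nhdsGT one_pos)).exists
  have hft : f w < f (g t w) := by
    simp only [g, map_add, map_smul, smul_eq_mul]
    nlinarith
  have hO : IsOpen (g t ⁻¹' (W ∩ {u | f w < f u})) :=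
    (hW.inter (isOpen_lt continuous_const f.continuous)).preimage (by fun_prop)
  obtain ⟨a, haO, haP⟩ := mem_closure_iff.1 hwP _ hO ⟨hgtW, hft⟩
  have hga : g t a ∈ V := hV (hPV haP) hv (by linarith) ht0.le (by ring)
  exact (hf _ (hVW ⟨hga, haO.1⟩)).not_gt haO.2

theorem segment_disjoint_of_wheel {V₁ V₂ V₃ T : Set E}
    (hV₁ : IsOpen V₁) (hV₂ : IsOpen V₂) (hV₃ : IsOpen V₃) (hT : IsOpen T)
    (hcV₁ : Convex ℝ V₁) (hcV₂ : Convex ℝ V₂) (hcV₃ : Convex ℝ V₃)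
    (h₁₂ : V₁ ∩ V₂ ⊆ V₃) (h₂₃ : V₂ ∩ V₃ ⊆ V₁) (hne : (V₁ ∩ V₂ ∩ V₃).Nonempty)
    (hdisj : Disjoint (V₁ ∩ V₂ ∩ V₃) T) {x y : E} (hx : x ∈ V₁) (hy : y ∈ V₃) :
    Disjoint (segment ℝ x y) (V₂ ∩ T) := by
  set P := V₁ ∩ V₂ ∩ V₃
  have hPo : IsOpen P := (hV₁.inter hV₂).inter hV₃
  obtain ⟨p, hp⟩ := hne
  refine disjoint_left.2 fun z hz ⟨hz₂, hzT⟩ => ?_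
  have hzP : z ∉ closure P := (hdisj.closure_left hT).notMem_of_mem_right hzT
  obtain ⟨w, hwseg, hwP, hwcl⟩ : ∃ w ∈ segment ℝ p z, w ∉ P ∧ w ∈ closure P := by
    by_contra! h
    obtain ⟨u, -, huP, hucl⟩ := (convex_segment p z).isPreconnected P (closure P)ᶜ hPo
      isClosed_closure.isOpen_compl (fun u hu => (em (u ∈ P)).imp id (h u hu))
      ⟨p, left_mem_segment ℝ p z, hp⟩ ⟨z, right_mem_segment ℝ p z, hzP⟩
    exact hucl (subset_closure huP)
  have hw₂ : w ∈ V₂ := hcV₂.segment_subset hp.1.2 hz₂ hwseg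
  obtain ⟨f, hf⟩ := geometric_hahn_banach_open_point ((hcV₁.inter hcV₂).inter hcV₃) hPo hwP
  have hfx : f x ≤ f w := hcV₁.apply_le_of_inter_open_subset hV₂ hw₂ hwcl
    (fun a ha => ha.1.1) (fun a ha => ⟨ha, h₁₂ ha⟩) hf hx
  have hfy : f y ≤ f w := hcV₃.apply_le_of_inter_open_subset hV₂ hw₂ hwcl
    (fun a ha => ha.2) (fun a ⟨ha₃, ha₂⟩ => ⟨⟨h₂₃ ⟨ha₂, ha₃⟩, ha₂⟩, ha₃⟩) hf hy
  have hfz : f z ≤ f w := (convex_halfSpace_le f.isLinear (f w)).segment_subset hfx hfy hz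
  have hwo : w ∈ openSegment ℝ p z :=
    mem_openSegment_of_ne_left_right (ne_of_mem_of_not_mem hp hwP)
      (fun hzw => hzP (hzw ▸ hwcl)) hwseg
  exact (f.toLinearMap.apply_lt_of_apply_lt_of_mem_openSegment hwo (hf p hp)).not_ge hfz

end TopologicalVectorSpace

namespace NeuralCode

variable {ι : Type*} {d : ℕ} {U : ι → Set (EuclideanSpace ℝ (Fin d))}

theorem isOpen_USet (hU : ∀ i, IsOpen (U i)) (σ : Finset ι) : IsOpen (USet U σ) :=
  isOpen_biInter_finset fun i _ => hU i

theorem convex_USet (hU : ∀ i, Convex ℝ (U i)) (σ : Finset ι) : Convex ℝ (USet U σ) :=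
  convex_iInter₂ fun i _ => hU i

theorem IsWheelOfRealization.not_forall_convex {σ₁ σ₂ σ₃ τ : Finset ι}
    (hw : IsWheelOfRealization U σ₁ σ₂ σ₃ τ) (hU : ∀ i, IsOpen (U i)) :
    ¬∀ i, Convex ℝ (U i) := by
  intro hcU
  obtain ⟨⟨h₁₂, -, h₂₃, hne⟩, hdisj, hseg⟩ := hw
  have hc := convex_USet hcU
  obtain ⟨x, hx, y, hy, z, hz, hz₂, hzT⟩ := hseg ⟨hc τ, (hc σ₁).inter (hc τ),
    (hc σ₂).inter (hc τ), (hc σ₃).inter (hc τ)⟩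
  have ho := isOpen_USet hU
  exact (segment_disjoint_of_wheel (ho σ₁) (ho σ₂) (ho σ₃) (ho τ) (hc σ₁) (hc σ₂) (hc σ₃)
      (inter_eq_left.1 h₁₂.symm) (fun a ha => (h₂₃ ▸ ha).1.1) hne
      (disjoint_iff_inter_eq_empty.2 hdisj) hx.1 hy.1).notMem_of_mem_left hz ⟨hz₂, hzT⟩

end NeuralCode

/-- A wheel of a realization precludes convexity of the realization;
consequently a wheel of every realization precludes convexity of the code. -/
theorem wheel_not_convex {n : ℕ} (C : Set (Finset (Fin n))) :
    (∀ (d : ℕ) (U : Fin n → Set (EuclideanSpace ℝ (Fin d))) (σ1 σ2 σ3 τ : Finset (Fin n)),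
        IsRealization C U → IsWheelOfRealization U σ1 σ2 σ3 τ →
        ¬∀ i, Convex ℝ (U i)) ∧
    ∀ σ1 σ2 σ3 τ : Finset (Fin n),
      (∀ (d : ℕ) (U : Fin n → Set (EuclideanSpace ℝ (Fin d))),
          IsRealization C U → IsWheelOfRealization U σ1 σ2 σ3 τ) →
      ¬IsConvexCode C :=
  ⟨fun _ _ _ _ _ _ hreal hw => hw.not_forall_convex hreal.1,
    fun _ _ _ _ hwheel ⟨_, U, hreal, hcU⟩ => (hwheel _ U hreal).not_forall_convex hreal.1 hcU⟩
end

section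
/- Let C be a code on n neurons, let U = (U_1, …, U_n) be a realization of C in ℝ^d, and let φ, ψ_1, …, ψ_r be subsets of [n]. Then U_φ ⊆ ⋃_{t=1}^r U_{ψ_t} if and only if Tk_C(φ) ⊆ ⋃_{t=1}^r Tk_C(ψ_t). -/
open NeuralCode

/-!
Sending a point `x` to its codeword `{i | x ∈ U i}` maps `ℝ^d` onto the code of `U`, and
`U_σ` is exactly the preimage of `Tk(σ)`. Inclusions between preimages under a map are
inclusions between the sets themselves as long as these lie in its range.
-/

namespace NeuralCode

variable {ι : Type*} {d : ℕ} (U : ι → Set (EuclideanSpace ℝ (Fin d)))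

def codeOf : Set (Finset ι) :=
  {c | (codeAtom U c).Nonempty}

theorem IsRealization.eq_codeOf {C : Set (Finset ι)} (hU : IsRealization C U) :
    C = codeOf U :=
  Set.ext hU.2

theorem mem_USet_iff {σ : Finset ι} {x : EuclideanSpace ℝ (Fin d)} :
    x ∈ USet U σ ↔ ∀ i ∈ σ, x ∈ U i :=
  Set.mem_iInter₂

theorem mem_codeAtom_iff {c : Finset ι} {x : EuclideanSpace ℝ (Fin d)} :
    x ∈ codeAtom U c ↔ ∀ i, i ∈ c ↔ x ∈ U i := by
  simp only [codeAtom, Set.mem_sdiff, mem_USet_iff, Set.mem_iUnion, not_exists]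
  exact ⟨fun h i => ⟨h.1 i, fun hx => by_contra fun hi => h.2 i hi hx⟩,
    fun h => ⟨fun i => (h i).1, fun i hi hx => hi ((h i).2 hx)⟩⟩

variable [Fintype ι]

open Classical in
noncomputable def pointCode (x : EuclideanSpace ℝ (Fin d)) : Finset ι :=
  {i | x ∈ U i}

variable {U}

theorem mem_pointCode {x : EuclideanSpace ℝ (Fin d)} {i : ι} :
    i ∈ pointCode U x ↔ x ∈ U i := by
  classical
  simp [pointCode]

theorem mem_codeAtom_iff_pointCode_eq {c : Finset ι} {x : EuclideanSpace ℝ (Fin d)} :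
    x ∈ codeAtom U c ↔ pointCode U x = c := by
  simp only [mem_codeAtom_iff, Finset.ext_iff, mem_pointCode, Iff.comm]

theorem range_pointCode : Set.range (pointCode U) = codeOf U :=
  Set.ext fun _ => exists_congr fun _ => mem_codeAtom_iff_pointCode_eq.symm

theorem preimage_trunk_codeOf (σ : Finset ι) :
    pointCode U ⁻¹' trunk (codeOf U) σ = USet U σ := by
  ext x
  simp only [Set.mem_preimage, trunk, Set.mem_ofPred_eq, ← range_pointCode,
    Set.mem_range_self, true_and, mem_USet_iff, Finset.subset_iff, mem_pointCode]

theorem USet_subset_iUnion_iff {τ : Type*} (φ : Finset ι) (ψ : τ → Finset ι) :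
    USet U φ ⊆ ⋃ t, USet U (ψ t) ↔ trunk (codeOf U) φ ⊆ ⋃ t, trunk (codeOf U) (ψ t) := by
  simp only [← preimage_trunk_codeOf, ← Set.preimage_iUnion]
  refine Set.preimage_subset_preimage_iff ?_
  rw [range_pointCode]
  exact fun _ hc => hc.1

end NeuralCode

/-- `U_φ ⊆ ⋃ U_{ψ_t}` iff `Tk_C(φ) ⊆ ⋃ Tk_C(ψ_t)`. -/
theorem trunk_covering_iff {n d r : ℕ} (C : Set (Finset (Fin n)))
    (U : Fin n → Set (EuclideanSpace ℝ (Fin d))) (hU : IsRealization C U)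
    (φ : Finset (Fin n)) (ψ : Fin r → Finset (Fin n)) :
    USet U φ ⊆ ⋃ t, USet U (ψ t) ↔ trunk C φ ⊆ ⋃ t, trunk C (ψ t) := by
  rw [hU.eq_codeOf]
  exact USet_subset_iUnion_iff φ ψ
end

section
/- Let C be a code on n neurons, let U be a realization of C in ℝ^d, and let σ1, σ2, σ3, τ ⊆ [n]. Then: (a) condition W(i) (U_{σj} ∩ U_{σk} = U_{σ1} ∩ U_{σ2} ∩ U_{σ3} ≠ ∅ for all 1 ≤ j < k ≤ 3) holds for U if and only if P(i) holds; (b) condition W(ii) (U_{σ1} ∩ U_{σ2} ∩ U_{σ3} ∩ U_τ = ∅) holds for U if and only if P(ii) holds; (c) condition W(iii)◦ (U_{σj} ∩ U_τ ≠ ∅ for j = 1, 2, 3) holds for U if and only if P(iii)◦ holds. In particular, each of these geometric conditions holds for one realization of C exactly when it holds for any other realization of C. -/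
open NeuralCode

/-! Every point `x` of the ambient space lies in the atom of the codeword
`{i | x ∈ U i}`, and a point of the atom of `c` lies in `U_σ` exactly when `σ ⊆ c`.
Hence `U_α ⊆ U_β` iff `Tk_C(α) ⊆ Tk_C(β)`, and `U_σ ≠ ∅` iff `σ ∈ Δ(C)`. Each of W(i), W(ii),
W(iii)◦ is a Boolean combination of such facts about sets `U_σ` (intersections being
`U_{σ ∪ σ'}`), so it translates term by term into P(i), P(ii), P(iii)◦. -/

namespace NeuralCode

variable {ι : Type*} {d : ℕ} {C : Set (Finset ι)} {U : ι → Set (EuclideanSpace ℝ (Fin d))}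

theorem mem_USet {x : EuclideanSpace ℝ (Fin d)} {σ : Finset ι} :
    x ∈ USet U σ ↔ ∀ i ∈ σ, x ∈ U i :=
  Set.mem_iInter₂

theorem USet_union [DecidableEq ι] (σ σ' : Finset ι) :
    USet U (σ ∪ σ') = USet U σ ∩ USet U σ' :=
  Finset.set_biInter_inter σ σ' U

theorem mem_USet_iff_subset_of_mem_codeAtom {x : EuclideanSpace ℝ (Fin d)} {c : Finset ι}
    (hx : x ∈ codeAtom U c) (σ : Finset ι) : x ∈ USet U σ ↔ σ ⊆ c := by
  obtain ⟨hxc, hx_out⟩ := hx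
  refine ⟨fun hxσ i hi => ?_, fun hσc => mem_USet.2 fun i hi => mem_USet.1 hxc i (hσc hi)⟩
  by_contra hic
  exact hx_out (Set.mem_iUnion₂.2 ⟨i, hic, mem_USet.1 hxσ i hi⟩)

theorem exists_mem_codeAtom [Finite ι] (U : ι → Set (EuclideanSpace ℝ (Fin d)))
    (x : EuclideanSpace ℝ (Fin d)) : ∃ c : Finset ι, x ∈ codeAtom U c := by
  have hfin := Set.toFinite {i | x ∈ U i}
  refine ⟨hfin.toFinset, mem_USet.2 fun i hi => hfin.mem_toFinset.1 hi, ?_⟩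
  intro hx_out
  obtain ⟨j, hj, hxj⟩ := Set.mem_iUnion₂.1 hx_out
  exact hj (hfin.mem_toFinset.2 hxj)

theorem exists_codeword_mem_USet_iff [Finite ι] (hU : IsRealization C U)
    (x : EuclideanSpace ℝ (Fin d)) :
    ∃ c ∈ C, ∀ σ : Finset ι, x ∈ USet U σ ↔ σ ⊆ c := by
  obtain ⟨c, hx⟩ := exists_mem_codeAtom U x
  exact ⟨c, (hU.2 c).2 ⟨x, hx⟩, mem_USet_iff_subset_of_mem_codeAtom hx⟩

theorem USet_subset_USet_iff [Finite ι] (hU : IsRealization C U) {α β : Finset ι} :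
    USet U α ⊆ USet U β ↔ trunk C α ⊆ trunk C β := by
  constructor
  · rintro hαβ c ⟨hcC, hαc⟩
    obtain ⟨x, hx⟩ := (hU.2 c).1 hcC
    exact ⟨hcC, (mem_USet_iff_subset_of_mem_codeAtom hx β).1
      (hαβ ((mem_USet_iff_subset_of_mem_codeAtom hx α).2 hαc))⟩
  · intro hαβ x hxα
    obtain ⟨c, hcC, hc⟩ := exists_codeword_mem_USet_iff hU x
    exact (hc β).2 (hαβ ⟨hcC, (hc α).1 hxα⟩).2

theorem USet_eq_USet_iff [Finite ι] (hU : IsRealization C U) {α β : Finset ι} :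
    USet U α = USet U β ↔ trunk C α = trunk C β := by
  simp only [Set.Subset.antisymm_iff, USet_subset_USet_iff hU]

theorem USet_nonempty_iff [Finite ι] (hU : IsRealization C U) {σ : Finset ι} :
    (USet U σ).Nonempty ↔ σ ∈ neuralComplex C := by
  constructor
  · rintro ⟨x, hx⟩
    obtain ⟨c, hcC, hc⟩ := exists_codeword_mem_USet_iff hU x
    exact ⟨c, hcC, (hc σ).1 hx⟩
  · rintro ⟨c, hcC, hσc⟩
    obtain ⟨x, hx⟩ := (hU.2 c).1 hcC
    exact ⟨x, (mem_USet_iff_subset_of_mem_codeAtom hx σ).2 hσc⟩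

variable [Finite ι] [DecidableEq ι]

theorem wheelWi_iff_condPi (hU : IsRealization C U) (σ1 σ2 σ3 : Finset ι) :
    WheelWi U σ1 σ2 σ3 ↔ CondPi C σ1 σ2 σ3 := by
  simp only [WheelWi, CondPi, ← USet_union, USet_eq_USet_iff hU, USet_nonempty_iff hU]
  tauto

theorem wheelWii_iff_condPii (hU : IsRealization C U) (σ1 σ2 σ3 τ : Finset ι) :
    WheelWii U σ1 σ2 σ3 τ ↔ CondPii C σ1 σ2 σ3 τ := by
  rw [WheelWii, CondPii, ← USet_union, ← USet_union, ← USet_union,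
    ← Set.not_nonempty_iff_eq_empty, USet_nonempty_iff hU]

theorem wheelWiiiCirc_iff_condPiiiCirc (hU : IsRealization C U) (σ1 σ2 σ3 τ : Finset ι) :
    WheelWiiiCirc U σ1 σ2 σ3 τ ↔ CondPiiiCirc C σ1 σ2 σ3 τ := by
  simp only [WheelWiiiCirc, CondPiiiCirc, ← USet_union, USet_nonempty_iff hU]

end NeuralCode

/-- the geometric conditions W(i), W(ii), W(iii)◦ for a realization are
equivalent to the combinatorial conditions P(i), P(ii), P(iii)◦; in particular each
holds for one realization exactly when it holds for any other realization. -/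
theorem wheel_conditions_iff_combinatorial {n d : ℕ} (C : Set (Finset (Fin n)))
    (U : Fin n → Set (EuclideanSpace ℝ (Fin d))) (hU : IsRealization C U)
    (σ1 σ2 σ3 τ : Finset (Fin n)) :
    (WheelWi U σ1 σ2 σ3 ↔ CondPi C σ1 σ2 σ3) ∧
    (WheelWii U σ1 σ2 σ3 τ ↔ CondPii C σ1 σ2 σ3 τ) ∧
    (WheelWiiiCirc U σ1 σ2 σ3 τ ↔ CondPiiiCirc C σ1 σ2 σ3 τ) ∧
    ∀ (e : ℕ) (V : Fin n → Set (EuclideanSpace ℝ (Fin e))), IsRealization C V →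
      (WheelWi U σ1 σ2 σ3 ↔ WheelWi V σ1 σ2 σ3) ∧
      (WheelWii U σ1 σ2 σ3 τ ↔ WheelWii V σ1 σ2 σ3 τ) ∧
      (WheelWiiiCirc U σ1 σ2 σ3 τ ↔ WheelWiiiCirc V σ1 σ2 σ3 τ) := by
  refine ⟨wheelWi_iff_condPi hU σ1 σ2 σ3, wheelWii_iff_condPii hU σ1 σ2 σ3 τ,
    wheelWiiiCirc_iff_condPiiiCirc hU σ1 σ2 σ3 τ, fun e V hV => ?_⟩
  rw [wheelWi_iff_condPi hU, wheelWii_iff_condPii hU, wheelWiiiCirc_iff_condPiiiCirc hU,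
    wheelWi_iff_condPi hV, wheelWii_iff_condPii hV, wheelWiiiCirc_iff_condPiiiCirc hV]
  exact ⟨Iff.rfl, Iff.rfl, Iff.rfl⟩
end

section
/- If (σ1, σ2, σ3, τ) is a sprocket of a code C on n neurons, then the rim τ is not a codeword of C, i.e., τ ∉ C. -/
/-!
Since `τ ∈ C`, the codeword `τ` lies in `Tk(ρ₁)` or in `Tk(ρ₃)`; say `ρ₁ ⊆ τ`. A codeword `c`
containing `σ₃ ∪ τ` (which exists by P(iii)◦) then contains `ρ₃`, hence `ρ₁ ∪ ρ₃ ∪ τ`, hence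
`σ₂`. By P(i) a codeword containing `σ₂ ∪ σ₃` contains all three `σⱼ`, so `c ⊇ σ₁ ∪ σ₂ ∪ σ₃ ∪ τ`,
contradicting P(ii). The case `ρ₃ ⊆ τ` is symmetric, with `σ₁` in place of `σ₃`.
-/

namespace NeuralCode

variable {ι : Type*} [DecidableEq ι] {C : Set (Finset ι)}

theorem union_mem_neuralComplex_of_trunk_subset {σ σ' : Finset ι} (hσ : σ ∈ neuralComplex C)
    (h : trunk C σ ⊆ trunk C σ') : σ' ∪ σ ∈ neuralComplex C := by
  obtain ⟨c, hc, hσc⟩ := hσ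
  exact ⟨c, hc, Finset.union_subset (h ⟨hc, hσc⟩).2 hσc⟩

theorem union_notMem_neuralComplex_of_condPii {σ1 σ2 σ3 τ π : Finset ι}
    (hPii : CondPii C σ1 σ2 σ3 τ) (hπ : trunk C π = trunk C (σ1 ∪ σ2 ∪ σ3)) :
    π ∪ τ ∉ neuralComplex C := by
  rintro ⟨c, hc, hπτ⟩
  have hcπ : c ∈ trunk C π := ⟨hc, Finset.union_subset_left hπτ⟩
  have hσc : σ1 ∪ σ2 ∪ σ3 ⊆ c := (hπ ▸ hcπ).2
  exact hPii ⟨c, hc, Finset.union_subset hσc (Finset.union_subset_right hπτ)⟩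

theorem trunk_union_subset_of_subset_of_trunk_subset {σ σ' τ ρ ρ' : Finset ι} (hρ : ρ ⊆ τ)
    (hρ' : trunk C (σ ∪ τ) ⊆ trunk C ρ') (hσ' : trunk C (ρ ∪ ρ' ∪ τ) ⊆ trunk C σ') :
    trunk C (σ ∪ τ) ⊆ trunk C σ' := by
  rintro c ⟨hc, hστ⟩
  have hτc : τ ⊆ c := Finset.union_subset_right hστ
  have hρ'c : ρ' ⊆ c := (hρ' ⟨hc, hστ⟩).2
  exact hσ' ⟨hc, Finset.union_subset (Finset.union_subset (hρ.trans hτc) hρ'c) hτc⟩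

end NeuralCode

open NeuralCode

/-- the rim of a sprocket is not a codeword. -/
theorem sprocket_rim_not_codeword {n : ℕ} (C : Set (Finset (Fin n)))
    (σ1 σ2 σ3 τ : Finset (Fin n)) (hs : IsSprocket C σ1 σ2 σ3 τ) : τ ∉ C := by
  intro hτC
  obtain ⟨-, -, -, -, ⟨-, h12, -, h23⟩, hPii, ⟨h1τ, -, h3τ⟩, ρ1, -, ρ3, -, hρ1, hρ3, hτρ, hρσ2⟩ :=
    hs
  rcases hτρ ⟨hτC, subset_rfl⟩ with ⟨-, hρ1τ⟩ | ⟨-, hρ3τ⟩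
  · have h3σ2 : trunk C (σ3 ∪ τ) ⊆ trunk C σ2 :=
      trunk_union_subset_of_subset_of_trunk_subset hρ1τ hρ3 hρσ2
    apply union_notMem_neuralComplex_of_condPii hPii h23
    simpa only [Finset.union_assoc] using union_mem_neuralComplex_of_trunk_subset h3τ h3σ2
  · have h1σ2 : trunk C (σ1 ∪ τ) ⊆ trunk C σ2 :=
      trunk_union_subset_of_subset_of_trunk_subset hρ3τ hρ1 (by rwa [Finset.union_comm ρ3 ρ1])
    apply union_notMem_neuralComplex_of_condPii hPii h12
    simpa only [Finset.union_assoc, Finset.union_left_comm σ2] using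
      union_mem_neuralComplex_of_trunk_subset h1τ h1σ2
end

section
/- If a code C on n neurons has a sprocket, then C has a sprocket whose rim is a max-intersection face of Δ(C): there exist faces σ1, σ2, σ3 and a face τ̃ of Δ(C) equal to the intersection of two or more distinct facets of Δ(C) such that (σ1, σ2, σ3, τ̃) is a sprocket of C. -/
open NeuralCode

/-! Replace the rim `τ` by the intersection `τ̃` of all facets containing it. Every face
`σ ∪ τ` lies in a facet containing `τ`, hence so does `σ ∪ τ̃`, so P(iii)◦ survives, while
the remaining sprocket conditions only weaken as the rim grows (trunks shrink, non-faces stay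
non-faces). And `τ` lies in at least two facets: were `F` the only one, all three `σj ∪ τ`,
and hence their union, would lie in `F`, against P(ii). -/

namespace NeuralCode

variable {ι : Type*} {C : Set (Finset ι)}

lemma trunk_anti {σ τ : Finset ι} (h : σ ⊆ τ) : trunk C τ ⊆ trunk C σ :=
  fun _ hc => ⟨hc.1, h.trans hc.2⟩

lemma mem_neuralComplex_of_subset {σ τ : Finset ι} (h : σ ⊆ τ) (hτ : τ ∈ neuralComplex C) :
    σ ∈ neuralComplex C :=
  let ⟨c, hc, hτc⟩ := hτ
  ⟨c, hc, h.trans hτc⟩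

lemma exists_isFacet_superset [Finite ι] {c : Finset ι} (hc : c ∈ C) :
    ∃ F, IsFacet C F ∧ c ⊆ F := by
  obtain ⟨F, ⟨hFC, hcF⟩, hmax⟩ :=
    Set.Finite.exists_maximalFor id {c' | c' ∈ C ∧ c ⊆ c'} (Set.toFinite _) ⟨c, hc, subset_rfl⟩
  exact ⟨F, ⟨hFC, fun c' hc' hFc' => (hmax ⟨hc', hcF.trans hFc'⟩ hFc').antisymm hFc'⟩, hcF⟩

lemma IsSprocket.of_rim_subset [DecidableEq ι] {σ1 σ2 σ3 τ τ' : Finset ι}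
    (hs : IsSprocket C σ1 σ2 σ3 τ) (hττ' : τ ⊆ τ') (hP : CondPiiiCirc C σ1 σ2 σ3 τ') :
    IsSprocket C σ1 σ2 σ3 τ' := by
  obtain ⟨h1, h2, h3, -, hPi, hPii, -, ρ1, hρ1, ρ3, hρ3, ht1, ht3, htτ, htρ⟩ := hs
  have hτ'_face : τ' ∈ neuralComplex C :=
    mem_neuralComplex_of_subset Finset.subset_union_right hP.1
  have hunion {σ : Finset ι} : σ ∪ τ ⊆ σ ∪ τ' := Finset.union_subset_union_right hττ'
  exact ⟨h1, h2, h3, hτ'_face, hPi, fun h => hPii (mem_neuralComplex_of_subset hunion h), hP,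
    ρ1, hρ1, ρ3, hρ3, (trunk_anti hunion).trans ht1, (trunk_anti hunion).trans ht3,
    (trunk_anti hττ').trans htτ, (trunk_anti hunion).trans htρ⟩

section FacetHull

variable [Fintype ι]

open Classical in
noncomputable def facetsContaining (C : Set (Finset ι)) (τ : Finset ι) : Finset (Finset ι) :=
  Finset.univ.filter fun F => IsFacet C F ∧ τ ⊆ F

lemma mem_facetsContaining {τ F : Finset ι} :
    F ∈ facetsContaining C τ ↔ IsFacet C F ∧ τ ⊆ F := by
  simp [facetsContaining]

variable [DecidableEq ι]

noncomputable def facetHull (C : Set (Finset ι)) (τ : Finset ι) : Finset ι :=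
  (facetsContaining C τ).inf id

lemma subset_facetHull {τ : Finset ι} : τ ⊆ facetHull C τ :=
  Finset.le_inf fun _ hF => (mem_facetsContaining.mp hF).2

lemma facetHull_subset_of_mem {τ F : Finset ι} (hF : F ∈ facetsContaining C τ) :
    facetHull C τ ⊆ F :=
  Finset.inf_le (f := id) hF

lemma exists_mem_facetsContaining_of_union_mem {σ τ : Finset ι}
    (h : σ ∪ τ ∈ neuralComplex C) :
    ∃ F ∈ facetsContaining C τ, σ ∪ facetHull C τ ⊆ F := by
  obtain ⟨c, hc, hsub⟩ := h
  obtain ⟨F, hF, hcF⟩ := exists_isFacet_superset hc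
  have hFτ : F ∈ facetsContaining C τ :=
    mem_facetsContaining.mpr ⟨hF, (Finset.subset_union_right.trans hsub).trans hcF⟩
  exact ⟨F, hFτ, Finset.union_subset ((Finset.subset_union_left.trans hsub).trans hcF)
    (facetHull_subset_of_mem hFτ)⟩

lemma union_facetHull_mem_neuralComplex {σ τ : Finset ι} (h : σ ∪ τ ∈ neuralComplex C) :
    σ ∪ facetHull C τ ∈ neuralComplex C :=
  let ⟨F, hF, hsub⟩ := exists_mem_facetsContaining_of_union_mem h
  ⟨F, (mem_facetsContaining.mp hF).1.1, hsub⟩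

lemma CondPiiiCirc.facetHull {σ1 σ2 σ3 τ : Finset ι} (hP : CondPiiiCirc C σ1 σ2 σ3 τ) :
    CondPiiiCirc C σ1 σ2 σ3 (facetHull C τ) :=
  ⟨union_facetHull_mem_neuralComplex hP.1, union_facetHull_mem_neuralComplex hP.2.1,
    union_facetHull_mem_neuralComplex hP.2.2⟩

lemma two_le_card_facetsContaining {σ1 σ2 σ3 τ : Finset ι} (hP : CondPiiiCirc C σ1 σ2 σ3 τ)
    (hPii : CondPii C σ1 σ2 σ3 τ) : 2 ≤ (facetsContaining C τ).card := by
  by_contra! hcard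
  have hunique := Finset.card_le_one.mp (Nat.le_of_lt_succ hcard)
  obtain ⟨F1, hF1, hs1⟩ := exists_mem_facetsContaining_of_union_mem hP.1
  obtain ⟨F2, hF2, hs2⟩ := exists_mem_facetsContaining_of_union_mem hP.2.1
  obtain ⟨F3, hF3, hs3⟩ := exists_mem_facetsContaining_of_union_mem hP.2.2
  rw [hunique F2 hF2 F1 hF1] at hs2
  rw [hunique F3 hF3 F1 hF1] at hs3
  refine hPii ⟨F1, (mem_facetsContaining.mp hF1).1.1, ?_⟩
  have hσ {σ : Finset ι} (hσ : σ ∪ facetHull C τ ⊆ F1) : σ ⊆ F1 :=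
    Finset.subset_union_left.trans hσ
  exact Finset.union_subset (Finset.union_subset (Finset.union_subset (hσ hs1) (hσ hs2))
    (hσ hs3)) (subset_facetHull.trans (facetHull_subset_of_mem hF1))

lemma isMaxIntersectionFace_facetHull {σ1 σ2 σ3 τ : Finset ι}
    (hP : CondPiiiCirc C σ1 σ2 σ3 τ) (hPii : CondPii C σ1 σ2 σ3 τ) :
    IsMaxIntersectionFace C (facetHull C τ) :=
  ⟨mem_neuralComplex_of_subset Finset.subset_union_right hP.facetHull.1,
    facetsContaining C τ, two_le_card_facetsContaining hP hPii,
    fun _ hF => (mem_facetsContaining.mp hF).1, rfl⟩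

end FacetHull

end NeuralCode

/-- bubble-up property for sprockets. -/
theorem sprocket_bubbles_up {n : ℕ} (C : Set (Finset (Fin n)))
    (h : ∃ σ1 σ2 σ3 τ : Finset (Fin n), IsSprocket C σ1 σ2 σ3 τ) :
    ∃ σ1 σ2 σ3 τ : Finset (Fin n),
      IsSprocket C σ1 σ2 σ3 τ ∧ IsMaxIntersectionFace C τ := by
  obtain ⟨σ1, σ2, σ3, τ, hs⟩ := h
  obtain ⟨-, -, -, -, -, hPii, hP, -⟩ := id hs
  exact ⟨σ1, σ2, σ3, facetHull C τ, hs.of_rim_subset subset_facetHull hP.facetHull,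
    isMaxIntersectionFace_facetHull hP hPii⟩
end

section
/- The code C_TL = { {1,2,3}, {1,4,5}, {2,4,5}, {2,4,6}, {3,4,6}, {2,4}, {4,5}, {4,6}, {1}, {2}, {3}, ∅ } on 6 neurons is non-convex: for no dimension d does C_TL admit a realization in ℝ^d by convex open sets. (Every maximal codeword of C_TL has three elements, so its neural complex has dimension 2; thus C_TL is a non-convex 3-sparse code.) -/
open NeuralCode

/-- The code `C_TL` (with neurons `1,…,6` encoded as `0,…,5` in `Fin 6`). -/
def codeTL : Set (Finset (Fin 6)) :=
  {{0, 1, 2}, {0, 3, 4}, {1, 3, 4}, {1, 3, 5}, {2, 3, 5}, {1, 3}, {3, 4}, {3, 5},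
    {0}, {1}, {2}, ∅}

/-!
In a realization `U` of `codeTL`, the sets `U 0 ∩ U 1` and `U 1 ∩ U 2` both equal
`K := U 0 ∩ U 1 ∩ U 2`, which is nonempty and disjoint from `U 3`; moreover `U 4 ∩ U 5 = ∅`
and `U 3 ⊆ U 1 ∪ U 4 ∪ U 5`. Pick `x ∈ U 0 ∩ U 3 ∩ U 4` and `y ∈ U 2 ∩ U 3 ∩ U 5`. The
segment `[x, y]` lies in `U 3` and is connected, so it cannot be covered by the disjoint open
sets `U 4`, `U 5`: some `z ∈ [x, y]` lies in `U 1 ∩ U 3`.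

Convexity then forces `z ∈ K`, a contradiction. Indeed, let `m` be a point where the segment
from some `p ∈ K` to `z` leaves `K`. Then `m ∈ U 1` lies in the closures of `U 0` and `U 2`, so
for small `s > 0` the points `m + s • (x - m)` and `m + s • (y - m)` lie in `U 0 ∩ U 1` and
`U 1 ∩ U 2`, that is, in `K`. Hence so does their convex combination `m + s • (z - m)`, and
then so does `m`, which lies between that point and `p`.
-/

open Set Filter Topology

theorem IsPreconnected.inter_frontier_nonempty {X : Type*} [TopologicalSpace X] {S K : Set X}
    (hS : IsPreconnected S) (hSK : (S ∩ K).Nonempty) (hSK' : (S \ K).Nonempty) :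
    (S ∩ frontier K).Nonempty := by
  by_contra h
  obtain ⟨p, hpS, hpK⟩ := hSK
  obtain ⟨z, hzS, hzK⟩ := hSK'
  have hcover : S ⊆ interior K ∪ (closure K)ᶜ := fun q hq => by
    by_cases hq' : q ∈ closure K
    · exact .inl (by_contra fun hi => h ⟨q, hq, hq', hi⟩)
    · exact .inr hq'
  have hp : p ∈ interior K := (hcover hpS).resolve_right (not_not.2 (subset_closure hpK))
  exact hzK (interior_subset (hS.subset_left_of_subset_union isOpen_interior
    isClosed_closure.isOpen_compl (disjoint_compl_right.mono_right
      (compl_subset_compl.2 interior_subset_closure)) hcover ⟨p, hpS, hp⟩ hzS))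

theorem IsPreconnected.not_subset_union {X : Type*} [TopologicalSpace X] {S u v : Set X}
    (hS : IsPreconnected S) (hu : IsOpen u) (hv : IsOpen v) (huv : Disjoint u v)
    (hSu : (S ∩ u).Nonempty) (hSv : (S ∩ v).Nonempty) : ¬S ⊆ u ∪ v := fun hSuv =>
  (hS u v hu hv hSuv hSu hSv).ne_empty (by simp [huv.inter_eq])

theorem mem_inter_inter_of_mem_segment {E : Type*} [AddCommGroup E] [Module ℝ E]
    [TopologicalSpace E] [IsTopologicalAddGroup E] [ContinuousSMul ℝ E] {A B C : Set E}
    (hAo : IsOpen A) (hBo : IsOpen B) (hCo : IsOpen C)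
    (hA : Convex ℝ A) (hB : Convex ℝ B) (hC : Convex ℝ C)
    (hAB : A ∩ B ⊆ C) (hBC : B ∩ C ⊆ A) (hne : (A ∩ B ∩ C).Nonempty)
    {x y z : E} (hx : x ∈ A) (hy : y ∈ C) (hz : z ∈ segment ℝ x y) (hzB : z ∈ B) :
    z ∈ A ∩ B ∩ C := by
  set K := A ∩ B ∩ C
  have hK : Convex ℝ K := (hA.inter hB).inter hC
  by_contra hzK
  obtain ⟨p, hp⟩ := hne
  obtain ⟨m, hm, hmK⟩ := (convex_segment p z).isPreconnected.inter_frontier_nonempty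
    ⟨p, left_mem_segment ℝ p z, hp⟩ ⟨z, right_mem_segment ℝ p z, hzK⟩
  rw [((hAo.inter hBo).inter hCo).frontier_eq] at hmK
  have hnear : ∀ v : E, ∀ᶠ s in 𝓝[>] (0 : ℝ), m + s • (v - m) ∈ B := fun v =>
    nhdsWithin_le_nhds <| (Continuous.tendsto' (by fun_prop) 0 m (by simp)).eventually
      (hBo.mem_nhds (hB.segment_subset hp.1.2 hzB hm))
  obtain ⟨s, ⟨haB, hcB⟩, hs⟩ :=
    (((hnear x).and (hnear y)).and (Ioc_mem_nhdsGT one_pos)).exists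
  have hmem : ∀ {D : Set E} {v : E}, IsOpen D → Convex ℝ D → m ∈ closure D → v ∈ D →
      m + s • (v - m) ∈ D := fun hDo hD hmD hv => by
    simpa only [hDo.interior_eq] using
      hD.add_smul_sub_mem_interior' hmD (by rwa [hDo.interior_eq]) hs
  have ha : m + s • (x - m) ∈ K := by
    have haA := hmem hAo hA (closure_mono (inter_subset_left.trans inter_subset_left) hmK.1) hx
    exact ⟨⟨haA, haB⟩, hAB ⟨haA, haB⟩⟩
  have hc : m + s • (y - m) ∈ K := by
    have hcC := hmem hCo hC (closure_mono inter_subset_right hmK.1) hy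
    exact ⟨⟨hBC ⟨hcB, hcC⟩, hcB⟩, hcC⟩
  have hw : m + s • (z - m) ∈ K := by
    obtain ⟨α, β, hα, hβ, hαβ, rfl⟩ := hz
    obtain rfl : β = 1 - α := by linarith
    convert hK ha hc hα hβ hαβ using 1
    module
  have hmw : m ∈ segment ℝ p (m + s • (z - m)) := by
    rw [mem_segment_iff_wbtw] at hm ⊢
    refine hm.trans_right_left (mem_segment_iff_wbtw.1 ?_)
    rw [segment_eq_image']
    exact ⟨s, Ioc_subset_Icc_self hs, rfl⟩
  exact hmK.2 (hK.segment_subset hp hw hmw)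

namespace NeuralCode

variable {ι : Type*} {d : ℕ} {C : Set (Finset ι)} {U : ι → Set (EuclideanSpace ℝ (Fin d))}

theorem IsRealization.uSet_nonempty (hU : IsRealization C U) {c : Finset ι} (hc : c ∈ C) :
    (USet U c).Nonempty :=
  ((hU.2 c).1 hc).mono sdiff_subset

theorem IsRealization.uSet_subset_biUnion [Fintype ι] (hU : IsRealization C U) {σ τ : Finset ι}
    (h : ∀ c ∈ C, σ ⊆ c → ∃ j ∈ τ, j ∈ c) : USet U σ ⊆ ⋃ j ∈ τ, U j := by
  classical
  intro q hq
  set c := Finset.univ.filter (q ∈ U ·)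
  have hc : c ∈ C := (hU.2 c).2 ⟨q, by simp [codeAtom, USet, c]⟩
  obtain ⟨j, hjτ, hjc⟩ := h c hc fun i hi => by simpa [c, USet] using mem_iInter₂.1 hq i hi
  exact mem_biUnion hjτ (by simpa [c] using hjc)

end NeuralCode

/-- the code `C_TL` is non-convex. -/
theorem codeTL_nonconvex : ¬IsConvexCode codeTL := by
  rintro ⟨d, U, hU, hconv⟩
  have h01 : U 0 ∩ U 1 ⊆ U 2 := by
    simpa [USet] using hU.uSet_subset_biUnion (σ := {0, 1}) (τ := {2})
      (by simp [codeTL, Finset.subset_iff])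
  have h12 : U 1 ∩ U 2 ⊆ U 0 := by
    simpa [USet] using hU.uSet_subset_biUnion (σ := {1, 2}) (τ := {0})
      (by simp [codeTL, Finset.subset_iff])
  have h013 : U 0 ∩ U 1 ∩ U 3 = ∅ := by
    simpa [USet, inter_assoc] using hU.uSet_subset_biUnion (σ := {0, 1, 3}) (τ := ∅)
      (by simp [codeTL, Finset.subset_iff])
  have h45 : U 4 ∩ U 5 = ∅ := by
    simpa [USet] using hU.uSet_subset_biUnion (σ := {4, 5}) (τ := ∅)
      (by simp [codeTL, Finset.subset_iff])
  have h3 : U 3 ⊆ U 1 ∪ (U 4 ∪ U 5) := by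
    simpa [USet] using hU.uSet_subset_biUnion (σ := {3}) (τ := {1, 4, 5})
      (by simp [codeTL, Finset.subset_iff])
  obtain ⟨p, hp⟩ := hU.uSet_nonempty (c := {0, 1, 2}) (by simp [codeTL])
  obtain ⟨x, hx⟩ := hU.uSet_nonempty (c := {0, 3, 4}) (by simp [codeTL])
  obtain ⟨y, hy⟩ := hU.uSet_nonempty (c := {2, 3, 5}) (by simp [codeTL])
  simp only [USet, Finset.mem_insert, Finset.mem_singleton, iInter_iInter_eq_or_left,
    iInter_iInter_eq_left, mem_inter_iff] at hp hx hy
  obtain ⟨z, hz, hz45⟩ := not_subset.1 <| (convex_segment x y).isPreconnected.not_subset_union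
    (hU.1 4) (hU.1 5) (disjoint_iff_inter_eq_empty.2 h45)
    ⟨x, left_mem_segment ℝ x y, hx.2.2⟩ ⟨y, right_mem_segment ℝ x y, hy.2.2⟩
  have hz3 : z ∈ U 3 := (hconv 3).segment_subset hx.2.1 hy.2.1 hz
  have hz1 : z ∈ U 1 := (h3 hz3).resolve_right hz45
  have hzK := mem_inter_inter_of_mem_segment (hU.1 0) (hU.1 1) (hU.1 2) (hconv 0) (hconv 1)
    (hconv 2) h01 h12 ⟨p, ⟨hp.1, hp.2.1⟩, hp.2.2⟩ hx.1 hy.1 hz hz1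
  exact h013.subset ⟨⟨hzK.1.1, hz1⟩, hz3⟩
end
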